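/- arXiv:2601.05885 — 2 statements merged into one kernel-verified Lean document; each statement's English description precedes it below -/
import Mathlib

section
/- For every t ≥ 1 and every n ≥ 4t, if there exist t edge-disjoint maximal outerplanar graphs on n vertices, then there exist t edge-disjoint maximal outerplanar graphs on n+1 vertices. -/
/-- A graph is outerplanar iff it admits a one-page book embedding. -/
def IsOuterplanar {V : Type*} (G : SimpleGraph V) : Prop :=
  ∃ f : V → ℕ, Function.Injective f ∧
    ∀ a b c d : V, G.Adj a b → G.Adj c d →
      ¬ (f a < f c ∧ f c < f b ∧ f b < f d)

/-- A maximal outerplanar graph: outerplanar, and no edge can be added keeping outerplanarity. -/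
def IsMaximalOuterplanar {V : Type*} (G : SimpleGraph V) : Prop :=
  IsOuterplanar G ∧ ∀ u v : V, u ≠ v → ¬ G.Adj u v →
    ¬ IsOuterplanar (G ⊔ SimpleGraph.fromEdgeSet {s(u, v)})

/-!
Choose in each `Gs i` an edge `uᵢvᵢ` of its outer cycle, i.e. two vertices consecutive in a
one-page book embedding, so that the `2t` endpoints are distinct. A greedy choice works: the spine
of `Gs i` has `n - 1 ≥ 4t - 1` consecutive pairs and each of the fewer than `2t` endpoints chosen
so far blocks at most two of them.

Placing a new vertex `x` between `uᵢ` and `vᵢ` on the spine and joining it to both keeps `Gs i`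
outerplanar, and also maximal: a chord between old vertices would already fit into `Gs i`, and a
chord `xc` either completes a `K₄` on `uᵢ, vᵢ, c, x`, or, after contracting the path `c x uᵢ`
(or `c x vᵢ`), yields an outerplanar `Gs i + cuᵢ` (or `Gs i + cvᵢ`). All new edges contain `x`
and distinct old endpoints, so edge-disjointness survives.
-/

open SimpleGraph

variable {V W : Type*}

-- `IsOuterplanar G` unfolds to `∃ f, Function.Injective f ∧ CrossFree G f`.
def CrossFree (G : SimpleGraph V) (f : V → ℕ) : Prop :=
  ∀ a b c d, G.Adj a b → G.Adj c d → ¬ (f a < f c ∧ f c < f b ∧ f b < f d)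

lemma CrossFree.comp_hom {G : SimpleGraph V} {K : SimpleGraph W} {g : W → ℕ}
    (hK : CrossFree K g) (φ : G →g K) : CrossFree G (g ∘ φ) :=
  fun _ _ _ _ hab hcd => hK _ _ _ _ (φ.map_adj hab) (φ.map_adj hcd)

lemma IsOuterplanar.of_hom {G : SimpleGraph V} {K : SimpleGraph W} (hK : IsOuterplanar K)
    (φ : G →g K) (hφ : Function.Injective φ) : IsOuterplanar G :=
  let ⟨g, hg, (hc : CrossFree K g)⟩ := hK
  ⟨g ∘ φ, hg.comp hφ, hc.comp_hom φ⟩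

lemma IsOuterplanar.of_hom_sup_edge {G : SimpleGraph V} {K : SimpleGraph W} {u v : V}
    (φ : G →g K) (hφ : Function.Injective φ) (hK : IsOuterplanar (K ⊔ edge (φ u) (φ v))) :
    IsOuterplanar (G ⊔ edge u v) := by
  refine hK.of_hom ⟨φ, fun {a b} hab => ?_⟩ hφ
  rcases hab with hab | hab
  · exact Or.inl (φ.map_adj hab)
  · right
    rw [edge_adj] at hab ⊢
    obtain ⟨⟨rfl, rfl⟩ | ⟨rfl, rfl⟩, hne⟩ := hab <;> simp [hφ.ne hne]

lemma CrossFree.sup_edge {G : SimpleGraph V} {f : V → ℕ} (hG : CrossFree G f) {u v : V}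
    (huv : f u < f v) (hgap : ∀ w, ¬ (f u < f w ∧ f w < f v)) : CrossFree (G ⊔ edge u v) f := by
  rintro a b c d hab hcd ⟨hac, hcb, hbd⟩
  rw [sup_adj, edge_adj] at hab hcd
  rcases hab with hab | ⟨⟨rfl, rfl⟩ | ⟨rfl, rfl⟩, -⟩ <;>
    rcases hcd with hcd | ⟨⟨rfl, rfl⟩ | ⟨rfl, rfl⟩, -⟩
  · exact hG a b c d hab hcd ⟨hac, hcb, hbd⟩
  · exact hgap b ⟨hcb, hbd⟩
  all_goals first | omega | exact hgap c ⟨hac, hcb⟩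

lemma CrossFree.not_separates_neighbors {K : SimpleGraph W} {g : W → ℕ} (hK : CrossFree K g)
    (hg : Function.Injective g) {x p q a b : W} (hp : K.Adj x p) (hq : K.Adj x q)
    (hab : K.Adj a b) (hxa : x ≠ a) (hxb : x ≠ b) :
    ¬ (g a < g p ∧ g p < g b ∧ (g q < g a ∨ g b < g q)) := by
  rintro ⟨hap, hpb, hq'⟩
  rcases lt_trichotomy (g x) (g a) with hxa' | hxa' | hxa'
  · exact hK x p a b hp hab ⟨hxa', hap, hpb⟩
  · exact hxa (hg hxa')
  rcases lt_trichotomy (g x) (g b) with hxb' | hxb' | hxb'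
  · rcases hq' with hq' | hq'
    · exact hK q x a b hq.symm hab ⟨hq', hxa', hxb'⟩
    · exact hK a b x q hab hq ⟨hxa', hxb', hq'⟩
  · exact hxb (hg hxb')
  · exact hK a b p x hab hp.symm ⟨hap, hpb, hxb'⟩

lemma IsOuterplanar.deleteIncidenceSet_sup_edge {K : SimpleGraph W} (hK : IsOuterplanar K)
    {x w w' : W} (hw : K.Adj x w) (hw' : K.Adj x w') :
    IsOuterplanar (K.deleteIncidenceSet x ⊔ edge w w') := by
  obtain ⟨g, hg, hc : CrossFree K g⟩ := hK
  refine ⟨g, hg, ?_⟩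
  rintro a b c d hab hcd ⟨hac, hcb, hbd⟩
  simp only [sup_adj, edge_adj, deleteIncidenceSet_adj] at hab hcd
  rcases hab with ⟨hab, hax, hbx⟩ | ⟨⟨rfl, rfl⟩ | ⟨rfl, rfl⟩, -⟩ <;>
    rcases hcd with ⟨hcd, hcx, hdx⟩ | ⟨⟨rfl, rfl⟩ | ⟨rfl, rfl⟩, -⟩
  · exact hc a b c d hab hcd ⟨hac, hcb, hbd⟩
  · exact hc.not_separates_neighbors hg hw hw' hab hax.symm hbx.symm ⟨hac, hcb, .inr hbd⟩
  · exact hc.not_separates_neighbors hg hw' hw hab hax.symm hbx.symm ⟨hac, hcb, .inr hbd⟩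
  · exact hc.not_separates_neighbors hg hw' hw hcd hcx.symm hdx.symm ⟨hcb, hbd, .inl hac⟩
  · omega
  · omega
  · exact hc.not_separates_neighbors hg hw hw' hcd hcx.symm hdx.symm ⟨hcb, hbd, .inl hac⟩
  · omega
  · omega

lemma not_isOuterplanar_top_fin_four : ¬ IsOuterplanar (⊤ : SimpleGraph (Fin 4)) := by
  rintro ⟨f, hf, hc⟩
  set σ := Tuple.sort f
  have hσ : StrictMono (f ∘ σ) :=
    (Tuple.monotone_sort f).strictMono_of_injective (hf.comp σ.injective)
  -- in spine order, the diagonals `σ 0 σ 2` and `σ 1 σ 3` cross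
  exact hc (σ 0) (σ 2) (σ 1) (σ 3) (σ.injective.ne (by decide)) (σ.injective.ne (by decide))
    ⟨hσ (by decide), hσ (by decide), hσ (by decide)⟩

lemma IsOuterplanar.cliqueFree_four {G : SimpleGraph V} (hG : IsOuterplanar G) :
    G.CliqueFree 4 :=
  cliqueFree_iff.mpr ⟨fun c => not_isOuterplanar_top_fin_four (hG.of_hom c.toHom c.injective)⟩

lemma Nat.exists_succ_notMem_of_two_mul_card_lt {T : Finset ℕ} {n : ℕ}
    (h : 2 * T.card + 1 < n) : ∃ k, k + 1 < n ∧ k ∉ T ∧ k + 1 ∉ T := by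
  have hcard : (T ∪ T.image (· - 1)).card < (Finset.range (n - 1)).card :=
    calc (T ∪ T.image (· - 1)).card ≤ T.card + (T.image (· - 1)).card := Finset.card_union_le _ _
      _ ≤ T.card + T.card := by grw [Finset.card_image_le]
      _ < (Finset.range (n - 1)).card := by rw [Finset.card_range]; omega
  obtain ⟨k, hk, hkT⟩ := Finset.exists_mem_notMem_of_card_lt_card hcard
  simp only [Finset.mem_range, Finset.mem_union, Finset.mem_image, not_or, not_exists,
    not_and] at hk hkT
  exact ⟨k, by omega, hkT.1, fun hk1 => hkT.2 (k + 1) hk1 rfl⟩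

/-- `u`, `v` are adjacent and consecutive in some one-page book embedding, so that `uv` is an
edge of the outer cycle. -/
def IsOuterEdge (G : SimpleGraph V) (u v : V) : Prop :=
  G.Adj u v ∧ ∃ f : V → ℕ, Function.Injective f ∧ CrossFree G f ∧ f u < f v ∧
    ∀ w, ¬ (f u < f w ∧ f w < f v)

lemma IsMaximalOuterplanar.isOuterEdge {G : SimpleGraph V} (hG : IsMaximalOuterplanar G)
    {f : V → ℕ} (hf : Function.Injective f) (hc : CrossFree G f) {u v : V} (huv : f u < f v)
    (hgap : ∀ w, ¬ (f u < f w ∧ f w < f v)) : IsOuterEdge G u v := by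
  refine ⟨?_, f, hf, hc, huv, hgap⟩
  by_contra hnadj
  exact hG.2 u v (fun h => huv.ne (congrArg f h)) hnadj ⟨f, hf, hc.sup_edge huv hgap⟩

lemma IsMaximalOuterplanar.exists_isOuterEdge_notMem {n : ℕ} {G : SimpleGraph (Fin n)}
    (hG : IsMaximalOuterplanar G) {S : Finset (Fin n)} (hS : 2 * S.card + 1 < n) :
    ∃ u v, IsOuterEdge G u v ∧ u ∉ S ∧ v ∉ S := by
  obtain ⟨f, hf, hc : CrossFree G f⟩ := hG.1
  set σ := Tuple.sort f
  have hσ : StrictMono (f ∘ σ) :=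
    (Tuple.monotone_sort f).strictMono_of_injective (hf.comp σ.injective)
  -- `σ` lists the vertices in spine order and `T` holds the spine positions of `S`
  set T := S.image fun w => (σ.symm w : ℕ)
  obtain ⟨k, hk, hkT, hk1T⟩ :=
    Nat.exists_succ_notMem_of_two_mul_card_lt (T := T) (by grw [Finset.card_image_le]; exact hS)
  have hσT : ∀ i : Fin n, σ i ∈ S → (i : ℕ) ∈ T := fun i hi =>
    Finset.mem_image.2 ⟨σ i, hi, by simp⟩
  have hgap : ∀ w, ¬ (f (σ ⟨k, by omega⟩) < f w ∧ f w < f (σ ⟨k + 1, hk⟩)) := by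
    rintro w ⟨hlo, hhi⟩
    obtain ⟨m, rfl⟩ := σ.surjective w
    have := hσ.lt_iff_lt.1 hlo
    have := hσ.lt_iff_lt.1 hhi
    simp only [Fin.lt_def] at *
    omega
  exact ⟨_, _, hG.isOuterEdge hf hc (hσ (Fin.mk_lt_mk.2 k.lt_succ_self)) hgap,
    fun h => hkT (hσT _ h), fun h => hk1T (hσT _ h)⟩

lemma exists_pairwise_disjoint_pairs {t : ℕ} (P : Fin t → V → V → Prop)
    (hP : ∀ i (S : Finset V), S.card < 2 * t → ∃ u v, P i u v ∧ u ∉ S ∧ v ∉ S) :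
    ∃ U W : Fin t → V, (∀ i, P i (U i) (W i)) ∧
      Pairwise fun i j => Disjoint ({U i, W i} : Set V) {U j, W j} := by
  classical
  induction t with
  | zero => exact ⟨Fin.elim0, Fin.elim0, fun i => i.elim0, fun i => i.elim0⟩
  | succ t ih =>
    obtain ⟨U, W, hUW, hdisj⟩ :=
      ih (fun i => P i.castSucc) fun i S hS => hP i.castSucc S (by omega)
    set S := Finset.univ.image U ∪ Finset.univ.image W
    have hS : S.card < 2 * (t + 1) := by
      grw [Finset.card_union_le, Finset.card_image_le, Finset.card_image_le]
      simp only [Finset.card_univ, Fintype.card_fin]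
      omega
    obtain ⟨u, v, huv, hu, hv⟩ := hP (Fin.last t) S hS
    have hnew (j : Fin t) : Disjoint ({u, v} : Set V) {U j, W j} := by
      have hUS : U j ∈ S := by simp [S]
      have hWS : W j ∈ S := by simp [S]
      rw [Set.disjoint_left]
      rintro x (rfl | rfl) (rfl | rfl) <;> contradiction
    refine ⟨Fin.snoc U u, Fin.snoc W v, Fin.lastCases (by simpa) (by simpa), ?_⟩
    intro i j hij
    induction i using Fin.lastCases <;> induction j using Fin.lastCases
    · exact absurd rfl hij
    · simpa using hnew _
    · simpa using (hnew _).symm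
    · simpa using hdisj (fun h => hij (congrArg _ h))

namespace SimpleGraph

variable {n : ℕ}

def addEar (G : SimpleGraph (Fin n)) (u v : Fin n) : SimpleGraph (Fin (n + 1)) :=
  G.map Fin.castSucc ⊔ edge u.castSucc (Fin.last n) ⊔ edge v.castSucc (Fin.last n)

variable {G : SimpleGraph (Fin n)} {u v : Fin n}

@[simp]
lemma addEar_adj_castSucc {a b : Fin n} :
    (G.addEar u v).Adj a.castSucc b.castSucc ↔ G.Adj a b := by
  simp only [addEar, sup_adj, edge_adj, map_adj', Fin.castSucc_ne_last]
  grind [Adj.ne]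

@[simp]
lemma addEar_adj_castSucc_last {a : Fin n} :
    (G.addEar u v).Adj a.castSucc (Fin.last n) ↔ a = u ∨ a = v := by
  simp [addEar, edge_adj, map_adj', Fin.castSucc_ne_last]

@[simp]
lemma addEar_adj_last_castSucc {a : Fin n} :
    (G.addEar u v).Adj (Fin.last n) a.castSucc ↔ a = u ∨ a = v := by
  rw [adj_comm, addEar_adj_castSucc_last]

lemma disjoint_edgeSet_addEar {G' : SimpleGraph (Fin n)} {u' v' : Fin n}
    (hG : Disjoint G.edgeSet G'.edgeSet) (huv : Disjoint ({u, v} : Set (Fin n)) {u', v'}) :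
    Disjoint (G.addEar u v).edgeSet (G'.addEar u' v').edgeSet := by
  rw [disjoint_edgeSet, disjoint_left] at hG ⊢
  intro a b hab hab'
  induction a using Fin.lastCases <;> induction b using Fin.lastCases
  · exact hab.ne rfl
  all_goals simp only [addEar_adj_castSucc, addEar_adj_castSucc_last,
    addEar_adj_last_castSucc] at hab hab'
  · exact Set.disjoint_left.1 huv hab hab'
  · exact Set.disjoint_left.1 huv hab hab'
  · exact hG _ _ hab hab'

end SimpleGraph

section AddEar

variable {n : ℕ} {G : SimpleGraph (Fin n)} {u v : Fin n}

lemma IsOuterEdge.isOuterplanar_addEar (huv : IsOuterEdge G u v) :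
    IsOuterplanar (G.addEar u v) := by
  obtain ⟨-, f, hf, hc, hlt, hgap⟩ := huv
  set g : Fin (n + 1) → ℕ := Fin.lastCases (2 * f u + 1) fun w => 2 * f w
  have hg_castSucc (w : Fin n) : g w.castSucc = 2 * f w := by simp [g]
  have hg_last : g (Fin.last n) = 2 * f u + 1 := by simp [g]
  have hg : Function.Injective g := by
    intro x y hxy
    induction x using Fin.lastCases <;> induction y using Fin.lastCases <;>
      simp only [hg_castSucc, hg_last] at hxy
    all_goals first | rfl | omega | exact congrArg _ (hf (by omega))
  have hmap : CrossFree (G.map Fin.castSucc) g := by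
    rintro _ _ _ _ ⟨-, a, b, hab, rfl, rfl⟩ ⟨-, c, d, hcd, rfl, rfl⟩ hcross
    simp only [hg_castSucc] at hcross
    exact hc a b c d hab hcd (by omega)
  refine ⟨g, hg, ?_⟩
  rw [addEar, edge_comm v.castSucc]
  refine (hmap.sup_edge ?_ ?_).sup_edge ?_ ?_
  all_goals simp only [hg_castSucc, hg_last]
  · omega
  · intro w
    induction w using Fin.lastCases <;> simp only [hg_castSucc, hg_last] <;> omega
  · have := hgap v
    omega
  · intro w
    induction w using Fin.lastCases with
    | last => simp only [hg_last]; omega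
    | cast w => simp only [hg_castSucc]; have := hgap w; omega

lemma IsMaximalOuterplanar.not_isOuterplanar_addEar_sup_edge_last
    (hG : IsMaximalOuterplanar G) (huv : G.Adj u v) {c : Fin n}
    (hc : ¬ (G.addEar u v).Adj c.castSucc (Fin.last n)) :
    ¬ IsOuterplanar (G.addEar u v ⊔ edge c.castSucc (Fin.last n)) := by
  intro hK
  set K := G.addEar u v ⊔ edge c.castSucc (Fin.last n)
  have hKc : K.Adj (Fin.last n) c.castSucc :=
    .inr ((edge_adj ..).2 ⟨.inr ⟨rfl, rfl⟩, (Fin.castSucc_ne_last c).symm⟩)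
  have hKu : K.Adj (Fin.last n) u.castSucc := by simp [K]
  have hKv : K.Adj (Fin.last n) v.castSucc := by simp [K]
  simp only [addEar_adj_castSucc_last, not_or] at hc
  -- contracting the path `c, Fin.last n, w` of `K` to the chord `cw` keeps it outerplanar
  have hcontract (w : Fin n) (hw : K.Adj (Fin.last n) w.castSucc) (hcw : c ≠ w) : G.Adj c w := by
    by_contra hnadj
    let φ : G →g K.deleteIncidenceSet (Fin.last n) :=
      ⟨Fin.castSucc, fun h => deleteIncidenceSet_adj.2
        ⟨.inl (addEar_adj_castSucc.2 h), Fin.castSucc_ne_last _, Fin.castSucc_ne_last _⟩⟩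
    exact hG.2 c w hcw hnadj
      ((hK.deleteIncidenceSet_sup_edge hKc hw).of_hom_sup_edge φ (Fin.castSucc_injective n))
  have hcu := hcontract u hKu hc.1
  have hcv := hcontract v hKv hc.2
  refine hK.cliqueFree_four {Fin.last n, u.castSucc, v.castSucc, c.castSucc} ?_
  refine (is3Clique_triple_iff.2 ⟨?_, ?_, ?_⟩).insert ?_
  · exact .inl (addEar_adj_castSucc.2 huv)
  · exact .inl (addEar_adj_castSucc.2 hcu.symm)
  · exact .inl (addEar_adj_castSucc.2 hcv.symm)
  · simp [hKu, hKv, hKc]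

lemma IsMaximalOuterplanar.addEar (hG : IsMaximalOuterplanar G) (huv : IsOuterEdge G u v) :
    IsMaximalOuterplanar (G.addEar u v) := by
  refine ⟨huv.isOuterplanar_addEar, fun a b hab hnadj hK => ?_⟩
  induction a using Fin.lastCases <;> induction b using Fin.lastCases
  · exact hab rfl
  · rw [Sym2.eq_swap] at hK
    exact hG.not_isOuterplanar_addEar_sup_edge_last huv.1 (fun h => hnadj h.symm) hK
  · exact hG.not_isOuterplanar_addEar_sup_edge_last huv.1 hnadj hK
  · rename_i a b
    exact hG.2 a b (fun h => hab (congrArg _ h)) (fun h => hnadj (addEar_adj_castSucc.2 h))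
      (hK.of_hom_sup_edge ⟨Fin.castSucc, addEar_adj_castSucc.2⟩ (Fin.castSucc_injective n))

end AddEar

theorem stmt_12_general (t n : ℕ) (hn : 4 * t ≤ n)
    (Gs : Fin t → SimpleGraph (Fin n))
    (hmax : ∀ i, IsMaximalOuterplanar (Gs i))
    (hdisj : ∀ i j, i ≠ j → Disjoint (Gs i).edgeSet (Gs j).edgeSet) :
    ∃ Hs : Fin t → SimpleGraph (Fin (n + 1)),
      (∀ i, IsMaximalOuterplanar (Hs i)) ∧
      (∀ i j, i ≠ j → Disjoint (Hs i).edgeSet (Hs j).edgeSet) := by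
  obtain ⟨U, W, hUW, hUW_disj⟩ := exists_pairwise_disjoint_pairs (fun i => IsOuterEdge (Gs i))
    fun i S hS => (hmax i).exists_isOuterEdge_notMem (by omega)
  exact ⟨fun i => (Gs i).addEar (U i) (W i), fun i => (hmax i).addEar (hUW i),
    fun i j hij => disjoint_edgeSet_addEar (hdisj i j hij) (hUW_disj hij)⟩

theorem stmt_12 (t n : ℕ) (ht : 1 ≤ t) (hn : 4 * t ≤ n)
    (Gs : Fin t → SimpleGraph (Fin n))
    (hmax : ∀ i, IsMaximalOuterplanar (Gs i))
    (hdisj : ∀ i j, i ≠ j → Disjoint (Gs i).edgeSet (Gs j).edgeSet) :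
    ∃ Hs : Fin t → SimpleGraph (Fin (n + 1)),
      (∀ i, IsMaximalOuterplanar (Hs i)) ∧
      (∀ i j, i ≠ j → Disjoint (Hs i).edgeSet (Hs j).edgeSet) :=
  stmt_12_general t n hn Gs hmax hdisj
end

section
/- The graph K_8 minus a perfect matching of two independent edges decomposes into two edge-disjoint maximal outerplanar graphs on 8 vertices; in particular there exists a graph on 8 vertices with 26 edges that is the edge-disjoint union of two outerplanar graphs. -/
/-! Orient each edge of a one-page book embedding `f` from its `f`-smaller to its `f`-larger end,
and charge the edge `(u, v)` to `(u, true)` if `v` has a neighbour to the left of `u`, to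
`(v, false)` otherwise. Two edges with the same charge would cross, and for the `f`-extreme
vertices `first` and `last` no edge is charged to `(first, false)`, `(first, true)` or
`(last, true)`. So an outerplanar graph on `n ≥ 2` vertices has at most `2n - 3` edges, and one
with exactly `2n - 3` edges is maximal. The two explicit halves of `K₈` minus `{2, 6}, {3, 7}`
are outerplanar with `13 = 2 · 8 - 3` edges each. -/

open SimpleGraph

section Noncrossing

variable {V α : Type*} [LinearOrder α] {G : SimpleGraph V} {f : V → α}

def SimpleGraph.IsNoncrossing (G : SimpleGraph V) (f : V → α) : Prop :=
  ∀ a b c d : V, G.Adj a b → G.Adj c d → ¬ (f a < f c ∧ f c < f b ∧ f b < f d)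

def SimpleGraph.orientedEdges (G : SimpleGraph V) (f : V → α) : Set (V × V) :=
  {p | G.Adj p.1 p.2 ∧ f p.1 < f p.2}

theorem SimpleGraph.ncard_edgeSet_eq_ncard_orientedEdges (hf : f.Injective) :
    G.edgeSet.ncard = (G.orientedEdges f).ncard := by
  symm
  refine Set.ncard_congr (fun p _ ↦ s(p.1, p.2)) (fun p hp ↦ hp.1) ?_ ?_
  · rintro ⟨a, b⟩ ⟨c, d⟩ ⟨-, hab⟩ ⟨-, hcd⟩ h
    rcases Sym2.eq_iff.1 h with ⟨rfl, rfl⟩ | ⟨rfl, rfl⟩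
    · rfl
    · exact (lt_asymm hab hcd).elim
  · refine Sym2.ind fun x y hxy ↦ ?_
    have hne : f x ≠ f y := hf.ne (G.ne_of_adj hxy)
    rcases hne.lt_or_gt with h | h
    · exact ⟨(x, y), ⟨hxy, h⟩, rfl⟩
    · exact ⟨(y, x), ⟨hxy.symm, h⟩, Sym2.eq_swap⟩

open Classical in
noncomputable def SimpleGraph.edgeCharge (G : SimpleGraph V) (f : V → α) (p : V × V) : V × Bool :=
  if ∃ w, G.Adj w p.2 ∧ f w < f p.1 then (p.1, true) else (p.2, false)

theorem SimpleGraph.IsNoncrossing.injOn_edgeCharge (hf : f.Injective) (hG : G.IsNoncrossing f) :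
    Set.InjOn (G.edgeCharge f) (G.orientedEdges f) := by
  rintro ⟨u, v⟩ ⟨huv, fuv⟩ ⟨u', v'⟩ ⟨hu'v', fu'v'⟩ h
  simp only [edgeCharge] at h
  split_ifs at h with hp hq hq <;> simp only [Prod.mk.injEq, reduceCtorEq, and_false] at h
  · obtain ⟨rfl, -⟩ := h
    obtain ⟨w, hwv, hwu⟩ := hp
    obtain ⟨w', hwv', hwu'⟩ := hq
    suffices f v = f v' by rw [hf this]
    rcases lt_trichotomy (f v) (f v') with hlt | heq | hgt
    · exact (hG w v u v' hwv hu'v' ⟨hwu, fuv, hlt⟩).elim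
    · exact heq
    · exact (hG w' v' u v hwv' huv ⟨hwu', fu'v', hgt⟩).elim
  · obtain ⟨rfl, -⟩ := h
    suffices f u = f u' by rw [hf this]
    rcases lt_trichotomy (f u) (f u') with hlt | heq | hgt
    · exact (hq ⟨u, huv, hlt⟩).elim
    · exact heq
    · exact (hp ⟨u', hu'v', hgt⟩).elim

theorem SimpleGraph.IsNoncrossing.ncard_orientedEdges_add_three_le [Finite V] [Nontrivial V]
    (hf : f.Injective) (hG : G.IsNoncrossing f) :
    (G.orientedEdges f).ncard + 3 ≤ 2 * Nat.card V := by
  obtain ⟨first, hfirst⟩ := Finite.exists_min f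
  obtain ⟨last, hlast⟩ := Finite.exists_max f
  have hne : first ≠ last := by
    obtain ⟨x, y, hxy⟩ := exists_pair_ne V
    rintro rfl
    exact hxy (hf (le_antisymm ((hlast x).trans (hfirst y)) ((hlast y).trans (hfirst x))))
  set missed : Set (V × Bool) := {(first, false), (first, true), (last, true)}
  have hmissed : missed.ncard = 3 :=
    Set.ncard_eq_three.2 ⟨_, _, _, by simp, by simp [hne], by simp [hne], rfl⟩
  have hcompl : missedᶜ.ncard + 3 = 2 * Nat.card V := by
    rw [← hmissed, Set.ncard_compl_add_ncard, Nat.card_prod, Nat.card_eq_fintype_card (α := Bool),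
      Fintype.card_bool, mul_comm]
  refine hcompl ▸ Nat.add_le_add_right (Set.ncard_le_ncard_of_injOn _ ?_ (hG.injOn_edgeCharge hf)) 3
  rintro ⟨u, v⟩ ⟨-, huv⟩
  simp only [edgeCharge]
  split_ifs with h
  · obtain ⟨w, -, hwu⟩ := h
    rintro (⟨_, ⟨⟩⟩ | ⟨rfl, -⟩ | ⟨rfl, -⟩)
    · exact (hwu.trans_le (hfirst w)).false
    · exact (huv.trans_le (hlast v)).false
  · rintro (⟨rfl, -⟩ | ⟨_, ⟨⟩⟩ | ⟨_, ⟨⟩⟩)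
    exact (huv.trans_le (hfirst u)).false

end Noncrossing

section Outerplanar

variable {V : Type*} [Finite V] [Nontrivial V] {G : SimpleGraph V}

theorem IsOuterplanar.ncard_edgeSet_add_three_le (hG : IsOuterplanar G) :
    G.edgeSet.ncard + 3 ≤ 2 * Nat.card V := by
  obtain ⟨f, hf, hcross⟩ := hG
  rw [ncard_edgeSet_eq_ncard_orientedEdges hf]
  exact IsNoncrossing.ncard_orientedEdges_add_three_le hf hcross

theorem IsOuterplanar.isMaximalOuterplanar (hG : IsOuterplanar G)
    (hcard : G.edgeSet.ncard + 3 = 2 * Nat.card V) : IsMaximalOuterplanar G := by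
  refine ⟨hG, fun u v huv hnadj hG' ↦ ?_⟩
  have hlt : G.edgeSet.ncard < (G ⊔ fromEdgeSet {s(u, v)}).edgeSet.ncard :=
    Set.ncard_lt_ncard (edgeSet_ssubset_edgeSet.2 (lt_sup_edge G u v huv hnadj))
  have := hG'.ncard_edgeSet_add_three_le
  omega

end Outerplanar

instance {V : Type*} [DecidableEq V] (F : Finset (Sym2 V)) :
    DecidableRel (fromEdgeSet (F : Set (Sym2 V))).Adj :=
  fun a b ↦ decidable_of_iff (s(a, b) ∈ F ∧ a ≠ b) (by simp)

theorem SimpleGraph.ncard_edgeSet_fromEdgeSet_finset {V : Type*} {F : Finset (Sym2 V)}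
    (hF : ∀ e ∈ F, ¬ e.IsDiag) : (fromEdgeSet (F : Set (Sym2 V))).edgeSet.ncard = F.card := by
  rw [edgeSet_fromEdgeSet, sdiff_eq_left.2, Set.ncard_coe_finset]
  exact Set.disjoint_left.2 fun e he ↦ hF e he

abbrev outerplanarHalf₁ : SimpleGraph (Fin 8) :=
  fromEdgeSet ↑({s(0, 1), s(1, 2), s(2, 3), s(3, 4), s(4, 5), s(5, 6), s(6, 7), s(7, 0),
    s(0, 2), s(2, 4), s(4, 6), s(6, 0), s(0, 4)} : Finset (Sym2 (Fin 8)))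

abbrev outerplanarHalf₂ : SimpleGraph (Fin 8) :=
  fromEdgeSet ↑({s(0, 3), s(3, 6), s(6, 1), s(1, 4), s(4, 7), s(7, 2), s(2, 5), s(5, 0),
    s(1, 3), s(3, 5), s(5, 7), s(7, 1), s(1, 5)} : Finset (Sym2 (Fin 8)))

theorem ncard_edgeSet_outerplanarHalf₁ : outerplanarHalf₁.edgeSet.ncard = 13 := by
  rw [ncard_edgeSet_fromEdgeSet_finset (by decide)]
  rfl

theorem ncard_edgeSet_outerplanarHalf₂ : outerplanarHalf₂.edgeSet.ncard = 13 := by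
  rw [ncard_edgeSet_fromEdgeSet_finset (by decide)]
  rfl

theorem isMaximalOuterplanar_outerplanarHalf₁ : IsMaximalOuterplanar outerplanarHalf₁ :=
  IsOuterplanar.isMaximalOuterplanar ⟨Fin.val, Fin.val_injective, by decide⟩
    (by rw [ncard_edgeSet_outerplanarHalf₁, Nat.card_eq_fintype_card, Fintype.card_fin])

/-- `v ↦ 3 v` is the position of `v` on the outer cycle `(0, 3, 6, 1, 4, 7, 2, 5)`. -/
theorem isMaximalOuterplanar_outerplanarHalf₂ : IsMaximalOuterplanar outerplanarHalf₂ :=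
  IsOuterplanar.isMaximalOuterplanar ⟨fun v ↦ (3 * v).val, by decide, by decide⟩
    (by rw [ncard_edgeSet_outerplanarHalf₂, Nat.card_eq_fintype_card, Fintype.card_fin])

theorem disjoint_outerplanarHalf₁_outerplanarHalf₂ :
    Disjoint outerplanarHalf₁ outerplanarHalf₂ := by
  rw [disjoint_iff]
  ext a b
  revert a b
  decide

theorem outerplanarHalf₁_sup_outerplanarHalf₂ :
    outerplanarHalf₁ ⊔ outerplanarHalf₂ =
      (⊤ : SimpleGraph (Fin 8)).deleteEdges {s(2, 6), s(3, 7)} := by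
  ext a b
  simp only [sup_adj, deleteEdges_adj, top_adj, Set.mem_insert_iff, Set.mem_singleton_iff,
    Sym2.eq_iff]
  revert a b
  decide

theorem stmt_17 :
    ∃ G₁ G₂ : SimpleGraph (Fin 8),
      IsMaximalOuterplanar G₁ ∧ IsMaximalOuterplanar G₂ ∧
      Disjoint G₁.edgeSet G₂.edgeSet ∧
      (G₁ ⊔ G₂).edgeSet.ncard = 26 ∧
      ∃ e f : Sym2 (Fin 8), ¬ e.IsDiag ∧ ¬ f.IsDiag ∧ e ≠ f ∧
        (∀ v : Fin 8, v ∈ e → v ∉ f) ∧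
        G₁ ⊔ G₂ = (⊤ : SimpleGraph (Fin 8)).deleteEdges {e, f} := by
  have hdisj := disjoint_edgeSet.2 disjoint_outerplanarHalf₁_outerplanarHalf₂
  refine ⟨outerplanarHalf₁, outerplanarHalf₂, isMaximalOuterplanar_outerplanarHalf₁,
    isMaximalOuterplanar_outerplanarHalf₂, hdisj, ?_, s(2, 6), s(3, 7), by decide, by decide,
    by decide, by decide, outerplanarHalf₁_sup_outerplanarHalf₂⟩
  rw [edgeSet_sup, Set.ncard_union_eq hdisj, ncard_edgeSet_outerplanarHalf₁,
    ncard_edgeSet_outerplanarHalf₂]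
end
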